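/- arXiv:1601.06530 — 4 statements merged into one kernel-verified Lean document; each statement's English description precedes it below -/
import Mathlib

section
/- Let r : ℤ → ℝ³ be a nondegenerate discrete centroaffine space curve with invariants κ_k, κ̄_k, τ_k. Then for every k ∈ ℤ the discrete Frenet–Serret (chain structure) equation holds: r(k+2) = κ_k · r(k−1) + (−κ_k − κ̄_k) · r(k) + (τ_k + κ̄_k + 1) · r(k+1). -/
/-- Determinant of the 3×3 matrix with columns `u`, `v`, `w`. -/
noncomputable def det3 (u v w : Fin 3 → ℝ) : ℝ := (Matrix.of ![u, v, w]).det

/-- Edge tangent vector of a discrete space curve. -/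
def tang3 (r : ℤ → Fin 3 → ℝ) (k : ℤ) : Fin 3 → ℝ := r (k + 1) - r k

/-- Nondegeneracy of a discrete centroaffine space curve. -/
def Nondeg3 (r : ℤ → Fin 3 → ℝ) : Prop :=
  ∀ k : ℤ, det3 (r (k - 1)) (r k) (r (k + 1)) ≠ 0

/-- First centroaffine curvature. -/
noncomputable def kappa3 (r : ℤ → Fin 3 → ℝ) (k : ℤ) : ℝ :=
  det3 (r k) (r (k + 1)) (r (k + 2)) / det3 (r (k - 1)) (r k) (r (k + 1))

/-- Second centroaffine curvature. -/
noncomputable def kbar3 (r : ℤ → Fin 3 → ℝ) (k : ℤ) : ℝ :=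
  det3 (r (k + 1)) (tang3 r (k - 1)) (tang3 r (k + 1)) /
    det3 (r k) (tang3 r (k - 1)) (tang3 r k)

/-- Centroaffine torsion. -/
noncomputable def tau3 (r : ℤ → Fin 3 → ℝ) (k : ℤ) : ℝ :=
  det3 (tang3 r (k - 1)) (tang3 r k) (tang3 r (k + 1)) /
    det3 (r (k - 1)) (r k) (r (k + 1))

/-! Since `r (k - 1), r k, r (k + 1)` is a basis, Cramer's rule writes
`r (k + 2) = a • r (k - 1) + b • r k + c • r (k + 1)`. Multilinearity and the alternating property
of the determinant then read the three invariants off the coefficients: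
`κ = a`, `κ̄ = -(a + b)` and `τ = a + b + c - 1`. -/

theorem det3_smul_eq_cramer (u v w z : Fin 3 → ℝ) :
    det3 u v w • z = det3 z v w • u + det3 u z w • v + det3 u v z • w := by
  funext i
  fin_cases i <;> simp [det3, Matrix.det_fin_three] <;> ring

theorem exists_eq_smul_add_smul_add_smul_of_det3_ne_zero {u v w : Fin 3 → ℝ}
    (h : det3 u v w ≠ 0) (z : Fin 3 → ℝ) : ∃ a b c : ℝ, z = a • u + b • v + c • w := by
  refine ⟨det3 z v w / det3 u v w, det3 u z w / det3 u v w, det3 u v z / det3 u v w, ?_⟩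
  simp only [div_eq_inv_mul, mul_smul, ← smul_add, ← det3_smul_eq_cramer, inv_smul_smul₀ h]

theorem det3_self_sub_sub (u v w : Fin 3 → ℝ) : det3 v (v - u) (w - v) = det3 u v w := by
  simp [det3, Matrix.det_fin_three]
  ring

section Combination

variable {u v w z : Fin 3 → ℝ} {a b c : ℝ}

theorem det3_cycle_of_eq (hz : z = a • u + b • v + c • w) : det3 v w z = a * det3 u v w := by
  subst hz
  simp [det3, Matrix.det_fin_three]
  ring

theorem det3_sub_sub_sub_of_eq (hz : z = a • u + b • v + c • w) :
    det3 (v - u) (w - v) (z - w) = (a + b + c - 1) * det3 u v w := by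
  subst hz
  simp [det3, Matrix.det_fin_three]
  ring

theorem det3_sub_sub_of_eq (hz : z = a • u + b • v + c • w) :
    det3 w (v - u) (z - w) = -(a + b) * det3 u v w := by
  subst hz
  simp [det3, Matrix.det_fin_three]
  ring

end Combination

theorem tang3_sub_one (r : ℤ → Fin 3 → ℝ) (k : ℤ) : tang3 r (k - 1) = r k - r (k - 1) := by
  simp [tang3]

theorem tang3_add_one (r : ℤ → Fin 3 → ℝ) (k : ℤ) :
    tang3 r (k + 1) = r (k + 2) - r (k + 1) := by
  simp [tang3, add_assoc, one_add_one_eq_two]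

/-- Discrete Frenet–Serret (chain structure) equation of a discrete centroaffine space
curve. -/
theorem stmt_8 (r : ℤ → Fin 3 → ℝ) (hr : Nondeg3 r) :
    ∀ k : ℤ, r (k + 2) =
      kappa3 r k • r (k - 1) + (-kappa3 r k - kbar3 r k) • r k +
        (tau3 r k + kbar3 r k + 1) • r (k + 1) := by
  intro k
  obtain ⟨a, b, c, hz⟩ := exists_eq_smul_add_smul_add_smul_of_det3_ne_zero (hr k) (r (k + 2))
  have hκ : kappa3 r k = a := by
    rw [kappa3, det3_cycle_of_eq hz, mul_div_cancel_right₀ _ (hr k)]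
  have hκbar : kbar3 r k = -(a + b) := by
    rw [kbar3, tang3_sub_one, tang3_add_one, det3_sub_sub_of_eq hz, tang3, det3_self_sub_sub,
      mul_div_cancel_right₀ _ (hr k)]
  have hτ : tau3 r k = a + b + c - 1 := by
    rw [tau3, tang3_sub_one, tang3_add_one, tang3, det3_sub_sub_sub_of_eq hz,
      mul_div_cancel_right₀ _ (hr k)]
  rw [hκ, hκbar, hτ, hz]
  module
end

section
/- Let r : ℤ → ℝ³ be a nondegenerate discrete centroaffine space curve, let β : ℤ → ℝ satisfy β_n ≠ 0 for all n, and define the transversal motion r'(n) = β_n · r(n) (which is again a nondegenerate curve). (i) If β is a constant function, then r' has the same invariants κ_n, κ̄_n, τ_n as r at every n ∈ ℤ. (ii) Conversely, if κ_n + κ̄_n ≠ 0 for all n and r' has the same invariants κ_n, κ̄_n, τ_n as r at every n ∈ ℤ, then β is a constant function. -/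
/-!
Scaling `r n` by `β n` multiplies `det[r i, r j, r l]` by `β i * β j * β l`. Hence the first
curvature `κₖ` is multiplied by `β (k+2) / β (k-1)`, and, because
`κₖ + κ̄ₖ = det[r (k-1), r (k+1), r (k+2)] / det[r (k-1), r k, r (k+1)]`, the sum `κₖ + κ̄ₖ` is
multiplied by `β (k+2) / β k`. A constant factor cancels from every invariant. Conversely,
nondegeneracy gives `κₖ ≠ 0`, so equal invariants force `β (k+2) = β (k-1)` and, when
`κₖ + κ̄ₖ ≠ 0`, also `β (k+2) = β k`; thus `β k = β (k-1)` for every `k`.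
-/

lemma det3_smul_smul_smul (a b c : ℝ) (u v w : Fin 3 → ℝ) :
    det3 (a • u) (b • v) (c • w) = a * b * c * det3 u v w := by
  simp only [det3, Matrix.det_fin_three, Matrix.of_apply, Matrix.cons_val, Pi.smul_apply,
    smul_eq_mul]
  ring

lemma tang3_const_smul (r : ℤ → Fin 3 → ℝ) (c : ℝ) (k : ℤ) :
    tang3 (fun n => c • r n) k = c • tang3 r k :=
  (smul_sub c _ _).symm

lemma kappa3_const_smul (r : ℤ → Fin 3 → ℝ) {c : ℝ} (hc : c ≠ 0) (k : ℤ) :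
    kappa3 (fun n => c • r n) k = kappa3 r k := by
  simp only [kappa3, det3_smul_smul_smul]
  exact mul_div_mul_left _ _ (by positivity)

lemma kbar3_const_smul (r : ℤ → Fin 3 → ℝ) {c : ℝ} (hc : c ≠ 0) (k : ℤ) :
    kbar3 (fun n => c • r n) k = kbar3 r k := by
  simp only [kbar3, tang3_const_smul, det3_smul_smul_smul]
  exact mul_div_mul_left _ _ (by positivity)

lemma tau3_const_smul (r : ℤ → Fin 3 → ℝ) {c : ℝ} (hc : c ≠ 0) (k : ℤ) :
    tau3 (fun n => c • r n) k = tau3 r k := by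
  simp only [tau3, tang3_const_smul, det3_smul_smul_smul]
  exact mul_div_mul_left _ _ (by positivity)

lemma kbar3_eq (r : ℤ → Fin 3 → ℝ) (k : ℤ) :
    kbar3 r k = (det3 (r (k - 1)) (r (k + 1)) (r (k + 2)) - det3 (r k) (r (k + 1)) (r (k + 2))) /
      det3 (r (k - 1)) (r k) (r (k + 1)) := by
  have h₁ : k - 1 + 1 = k := by ring
  have h₂ : k + 1 + 1 = k + 2 := by ring
  simp only [kbar3, tang3, h₁, h₂]
  congr 1 <;>
  · simp only [det3, Matrix.det_fin_three, Matrix.of_apply, Matrix.cons_val, Pi.sub_apply]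
    ring

lemma kappa3_add_kbar3 (r : ℤ → Fin 3 → ℝ) (k : ℤ) :
    kappa3 r k + kbar3 r k =
      det3 (r (k - 1)) (r (k + 1)) (r (k + 2)) / det3 (r (k - 1)) (r k) (r (k + 1)) := by
  rw [kappa3, kbar3_eq, ← add_div, add_sub_cancel]

section Transversal

variable {r : ℤ → Fin 3 → ℝ} {β : ℤ → ℝ}

lemma Nondeg3.smul (hr : Nondeg3 r) (hβ : ∀ n, β n ≠ 0) : Nondeg3 (fun n => β n • r n) :=
  fun k => by
    simp only [det3_smul_smul_smul]
    exact mul_ne_zero (mul_ne_zero (mul_ne_zero (hβ _) (hβ _)) (hβ _)) (hr k)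

lemma Nondeg3.kappa3_ne_zero (hr : Nondeg3 r) (k : ℤ) : kappa3 r k ≠ 0 := by
  have h := hr (k + 1)
  rw [add_sub_cancel_right, add_assoc, one_add_one_eq_two] at h
  exact div_ne_zero h (hr k)

variable (r)

lemma kappa3_smul (k : ℤ) (h₀ : β k ≠ 0) (h₁ : β (k + 1) ≠ 0) :
    kappa3 (fun n => β n • r n) k = β (k + 2) / β (k - 1) * kappa3 r k := by
  simp only [kappa3, det3_smul_smul_smul]
  field_simp

lemma kappa3_add_kbar3_smul (k : ℤ) (h₀ : β (k - 1) ≠ 0) (h₁ : β (k + 1) ≠ 0) :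
    kappa3 (fun n => β n • r n) k + kbar3 (fun n => β n • r n) k =
      β (k + 2) / β k * (kappa3 r k + kbar3 r k) := by
  simp only [kappa3_add_kbar3, det3_smul_smul_smul]
  field_simp

end Transversal

/-- Transversal motion `r' n = βₙ • r n` of a discrete centroaffine space curve:
it is again nondegenerate; if `β` is constant the invariants are preserved, and
(assuming `κₙ + κ̄ₙ ≠ 0`) conversely. -/
theorem stmt_13 (r : ℤ → Fin 3 → ℝ) (hr : Nondeg3 r) (β : ℤ → ℝ)
    (hβ : ∀ n : ℤ, β n ≠ 0) :
    Nondeg3 (fun n => β n • r n) ∧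
    ((∀ n m : ℤ, β n = β m) →
      ∀ n : ℤ, kappa3 (fun n => β n • r n) n = kappa3 r n ∧
        kbar3 (fun n => β n • r n) n = kbar3 r n ∧
        tau3 (fun n => β n • r n) n = tau3 r n) ∧
    ((∀ n : ℤ, kappa3 r n + kbar3 r n ≠ 0) →
      (∀ n : ℤ, kappa3 (fun n => β n • r n) n = kappa3 r n ∧
        kbar3 (fun n => β n • r n) n = kbar3 r n ∧
        tau3 (fun n => β n • r n) n = tau3 r n) →
      ∀ n m : ℤ, β n = β m) := by
  refine ⟨hr.smul hβ, fun hconst n => ?_, fun hsum hinv => ?_⟩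
  · have hcurve : (fun n => β n • r n) = fun n => β 0 • r n :=
      funext fun n => by rw [hconst n 0]
    rw [hcurve]
    exact ⟨kappa3_const_smul r (hβ 0) n, kbar3_const_smul r (hβ 0) n, tau3_const_smul r (hβ 0) n⟩
  · have hstep : ∀ k, β k = β (k - 1) := fun k => by
      obtain ⟨hκ, hκbar, -⟩ := hinv k
      have hκsum := congrArg₂ (· + ·) hκ hκbar
      rw [kappa3_smul r _ (hβ _) (hβ _)] at hκ
      rw [kappa3_add_kbar3_smul r _ (hβ _) (hβ _)] at hκsum
      have h₁ : β (k + 2) = β (k - 1) :=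
        (div_eq_one_iff_eq (hβ _)).1 ((mul_eq_right₀ (hr.kappa3_ne_zero k)).1 hκ)
      have h₂ : β (k + 2) = β k :=
        (div_eq_one_iff_eq (hβ _)).1 ((mul_eq_right₀ (hsum k)).1 hκsum)
      exact h₂.symm.trans h₁
    have hper : Function.Periodic β 1 := fun k => by simpa using hstep (k + 1)
    exact fun n m => by simpa using (hper.int_mul n 0).trans (hper.int_mul m 0).symm
end

section
/- Let r : ℤ → ℝ² be a nondegenerate discrete planar curve and let k ∈ ℤ be such that 1 + κ_k + κ̄_k ≠ 0. Then the point r(k) + (1/(1 + κ_k + κ̄_k)) · (r(k+2) − r(k)) equals the point r(k−1) + ((1 + κ̄_k)/(1 + κ_k + κ̄_k)) · (r(k+1) − r(k−1)); that is, the two consecutive diagonals through r(k), r(k+2) and through r(k−1), r(k+1) intersect at this common point (the vertex of the pentagram map, with centroaffinely invariant division ratios λ_k = 1/(1+κ_k+κ̄_k) and λ̄_k = (1+κ̄_k)/(1+κ_k+κ̄_k)). -/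
/-- Planar determinant of two vectors in ℝ². -/
def det2 (u v : Fin 2 → ℝ) : ℝ := u 0 * v 1 - u 1 * v 0

/-- Edge tangent vector of a discrete planar curve. -/
def tang2 (r : ℤ → Fin 2 → ℝ) (k : ℤ) : Fin 2 → ℝ := r (k + 1) - r k

/-- Nondegeneracy of a discrete planar curve. -/
def Nondeg2 (r : ℤ → Fin 2 → ℝ) : Prop :=
  ∀ k : ℤ, det2 (tang2 r (k - 1)) (tang2 r k) ≠ 0

/-- First centroaffine curvature. -/
noncomputable def kappa2 (r : ℤ → Fin 2 → ℝ) (k : ℤ) : ℝ :=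
  det2 (tang2 r k) (tang2 r (k + 1)) / det2 (tang2 r (k - 1)) (tang2 r k)

/-- Second centroaffine curvature. -/
noncomputable def kbar2 (r : ℤ → Fin 2 → ℝ) (k : ℤ) : ℝ :=
  det2 (tang2 r (k - 1)) (tang2 r (k + 1)) / det2 (tang2 r (k - 1)) (tang2 r k)

/-!
Cramer's rule expands the tangent `t_{k+1}` in the basis `t_{k-1}, t_k` as
`t_{k+1} = κ̄_k t_k - κ_k t_{k-1}`. Both points of the statement then become
`r(k) + λ_k ((1 + κ̄_k) t_k - κ_k t_{k-1})`, using `λ̄_k - 1 = -κ_k λ_k`.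
-/

theorem det2_smul_eq_sub (u v w : Fin 2 → ℝ) :
    det2 u v • w = det2 u w • v - det2 v w • u := by
  ext i
  fin_cases i <;> (simp [det2]; ring)

theorem tang2_add_one_eq {r : ℤ → Fin 2 → ℝ} {k : ℤ}
    (hk : det2 (tang2 r (k - 1)) (tang2 r k) ≠ 0) :
    tang2 r (k + 1) = kbar2 r k • tang2 r k - kappa2 r k • tang2 r (k - 1) := by
  rw [kbar2, kappa2, div_eq_inv_mul, div_eq_inv_mul, mul_smul, mul_smul, ← smul_sub,
    ← det2_smul_eq_sub, smul_smul, inv_mul_cancel₀ hk, one_smul]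

theorem tang2_sub_one_add (r : ℤ → Fin 2 → ℝ) (k : ℤ) : r (k - 1) + tang2 r (k - 1) = r k := by
  simp [tang2]

theorem sub_sub_one_eq_tang2_add (r : ℤ → Fin 2 → ℝ) (k : ℤ) :
    r (k + 1) - r (k - 1) = tang2 r (k - 1) + tang2 r k := by
  simp [tang2]

theorem sub_eq_tang2_add_tang2 (r : ℤ → Fin 2 → ℝ) (k : ℤ) :
    r (k + 2) - r k = tang2 r k + tang2 r (k + 1) := by
  simpa [add_assoc, one_add_one_eq_two] using sub_sub_one_eq_tang2_add r (k + 1)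

/-- The two consecutive shortest diagonals of a discrete planar curve intersect at the
pentagram-map vertex, with centroaffinely invariant division ratios. -/
theorem stmt_15 (r : ℤ → Fin 2 → ℝ) (hr : Nondeg2 r) (k : ℤ)
    (h : 1 + kappa2 r k + kbar2 r k ≠ 0) :
    r k + (1 / (1 + kappa2 r k + kbar2 r k)) • (r (k + 2) - r k) =
      r (k - 1) + ((1 + kbar2 r k) / (1 + kappa2 r k + kbar2 r k)) •
        (r (k + 1) - r (k - 1)) := by
  rw [sub_eq_tang2_add_tang2, sub_sub_one_eq_tang2_add, ← tang2_sub_one_add r k,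
    tang2_add_one_eq (hr k)]
  match_scalars
  · rfl
  · field_simp
    ring
  · ring
end

section
/- Let r : ℤ → ℝ³ be a nondegenerate discrete centroaffine space curve with constant invariants κ_n = κ, κ̄_n = κ̄, τ_n = τ for all n, let 0 < α < 1, and define the iterated curve s(n) = (1−α)·r(n) + α·r(n+1). If s is also nondegenerate, then s has exactly the same constant invariants: its first curvature is κ, its second curvature is κ̄, and its torsion is τ at every n ∈ ℤ. In particular, a discrete space curve with constant centroaffine curvatures and torsions is stable under iterations of definite proportional division points. -/
lemma det3_def (u v w : Fin 3 → ℝ) :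
    det3 u v w = u 0 * (v 1 * w 2 - v 2 * w 1) - u 1 * (v 0 * w 2 - v 2 * w 0)
      + u 2 * (v 0 * w 1 - v 1 * w 0) := by
  simp [det3, Matrix.det_fin_three]
  ring

/-- Cramer's rule in dimension 3. -/
lemma cramer3 (e1 e2 e3 v : Fin 3 → ℝ) :
    det3 e1 e2 e3 • v =
      det3 v e2 e3 • e1 + det3 e1 v e3 • e2 + det3 e1 e2 v • e3 := by
  funext i
  have h0 : (0 : Fin 3) = ⟨0, by norm_num⟩ := rfl
  have h1 : (1 : Fin 3) = ⟨1, by norm_num⟩ := rfl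
  have h2 : (2 : Fin 3) = ⟨2, by norm_num⟩ := rfl
  fin_cases i <;>
    simp only [Pi.smul_apply, Pi.add_apply, smul_eq_mul, det3_def, h0, h1, h2] <;> ring

lemma det3_rot (u v w : Fin 3 → ℝ) : det3 u v w = det3 v w u := by
  simp only [det3_def]; ring

lemma det3_swap23 (u v w : Fin 3 → ℝ) : det3 u v w = -det3 u w v := by
  simp only [det3_def]; ring

/-- denominator identity for the second curvature. -/
lemma det3_den (e1 e2 e3 : Fin 3 → ℝ) :
    det3 e2 (e2 - e1) (e3 - e2) = det3 e1 e2 e3 := by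
  simp only [det3_def, Pi.sub_apply]; ring

/-- numerator identity for the second curvature. -/
lemma det3_kbar_num (e1 e2 e3 v : Fin 3 → ℝ) :
    det3 e3 (e2 - e1) (v - e3) = det3 e1 e3 v - det3 e2 e3 v := by
  simp only [det3_def, Pi.sub_apply]; ring

/-- numerator identity for the torsion. -/
lemma det3_tau_num (e1 e2 e3 v : Fin 3 → ℝ) :
    det3 (e2 - e1) (e3 - e2) (v - e3) =
      det3 e2 e3 v - det3 e1 e3 v + det3 e1 e2 v - det3 e1 e2 e3 := by
  simp only [det3_def, Pi.sub_apply]; ring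

lemma det3_rec1 (e1 e2 e3 : Fin 3 → ℝ) (a b c : ℝ) :
    det3 e2 e3 (a • e1 + b • e2 + c • e3) = a * det3 e1 e2 e3 := by
  simp only [det3_def, Pi.add_apply, Pi.smul_apply, smul_eq_mul]; ring

lemma det3_rec2 (e1 e2 e3 : Fin 3 → ℝ) (a b c : ℝ) :
    det3 e3 (e2 - e1) (a • e1 + b • e2 + c • e3 - e3) =
      (-a - b) * det3 e1 e2 e3 := by
  simp only [det3_def, Pi.add_apply, Pi.sub_apply, Pi.smul_apply, smul_eq_mul]; ring

lemma det3_rec3 (e1 e2 e3 : Fin 3 → ℝ) (a b c : ℝ) :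
    det3 (e2 - e1) (e3 - e2) (a • e1 + b • e2 + c • e3 - e3) =
      (a + b + c - 1) * det3 e1 e2 e3 := by
  simp only [det3_def, Pi.add_apply, Pi.sub_apply, Pi.smul_apply, smul_eq_mul]; ring

/-- A discrete space curve with constant centroaffine curvatures and torsion is stable
under iterations of definite proportional division points. -/
theorem stmt_16 (r : ℤ → Fin 3 → ℝ) (hr : Nondeg3 r) (κ κbar τ : ℝ)
    (hconst : ∀ n : ℤ, kappa3 r n = κ ∧ kbar3 r n = κbar ∧ tau3 r n = τ)
    (α : ℝ) (hα0 : 0 < α) (hα1 : α < 1)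
    (hs : Nondeg3 (fun n => (1 - α) • r n + α • r (n + 1))) :
    ∀ n : ℤ, kappa3 (fun n => (1 - α) • r n + α • r (n + 1)) n = κ ∧
      kbar3 (fun n => (1 - α) • r n + α • r (n + 1)) n = κbar ∧
      tau3 (fun n => (1 - α) • r n + α • r (n + 1)) n = τ := by
  set s : ℤ → Fin 3 → ℝ := fun n => (1 - α) • r n + α • r (n + 1) with hsdef
  -- the curve r satisfies a constant-coefficient linear recurrence
  have hrec : ∀ k : ℤ, r (k + 2) =
      κ • r (k - 1) + (-(κ + κbar)) • r k + (1 + κbar + τ) • r (k + 1) := by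
    intro k
    obtain ⟨hκ, hκb, hτ⟩ := hconst k
    have hA : det3 (r (k - 1)) (r k) (r (k + 1)) ≠ 0 := hr k
    simp only [kappa3] at hκ
    have hB : det3 (r k) (r (k + 1)) (r (k + 2)) =
        κ * det3 (r (k - 1)) (r k) (r (k + 1)) := (div_eq_iff hA).mp hκ
    simp only [kbar3, tang3] at hκb
    rw [show k - 1 + 1 = k by ring, show k + 1 + 1 = k + 2 by ring,
      det3_den, det3_kbar_num] at hκb
    have hY : det3 (r (k - 1)) (r (k + 1)) (r (k + 2)) =
        (κ + κbar) * det3 (r (k - 1)) (r k) (r (k + 1)) := by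
      have h := (div_eq_iff hA).mp hκb
      linear_combination h + hB
    simp only [tau3, tang3] at hτ
    rw [show k - 1 + 1 = k by ring, show k + 1 + 1 = k + 2 by ring,
      det3_tau_num] at hτ
    have hX : det3 (r (k - 1)) (r k) (r (k + 2)) =
        (1 + κbar + τ) * det3 (r (k - 1)) (r k) (r (k + 1)) := by
      have h := (div_eq_iff hA).mp hτ
      linear_combination h + hY - hB
    have hc := cramer3 (r (k - 1)) (r k) (r (k + 1)) (r (k + 2))
    rw [det3_rot (r (k + 2)) (r k) (r (k + 1)), hB,
      det3_swap23 (r (k - 1)) (r (k + 2)) (r (k + 1)), hY, hX] at hc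
    funext i
    have h := congrFun hc i
    simp only [Pi.smul_apply, Pi.add_apply, smul_eq_mul, Pi.neg_apply] at h ⊢
    apply mul_left_cancel₀ hA
    rw [h]; ring
  -- hence s satisfies the same recurrence
  have hsrec : ∀ k : ℤ, s (k + 2) =
      κ • s (k - 1) + (-(κ + κbar)) • s k + (1 + κbar + τ) • s (k + 1) := by
    intro k
    have h1 := hrec k
    have h2 := hrec (k + 1)
    rw [show k + 1 - 1 = k by ring, show k + 1 + 1 = k + 2 by ring,
      show k + 1 + 2 = k + 3 by ring] at h2
    simp only [hsdef]
    rw [show k + 2 + 1 = k + 3 by ring, show k - 1 + 1 = k by ring,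
      show k + 1 + 1 = k + 2 by ring]
    funext i
    have g1 := congrFun h1 i
    have g2 := congrFun h2 i
    simp only [Pi.smul_apply, Pi.add_apply, smul_eq_mul, Pi.neg_apply] at g1 g2 ⊢
    rw [g2, g1]; ring
  intro n
  have hE : det3 (s (n - 1)) (s n) (s (n + 1)) ≠ 0 := hs n
  refine ⟨?_, ?_, ?_⟩
  · simp only [kappa3]
    rw [hsrec n, det3_rec1, mul_div_assoc, div_self hE, mul_one]
  · simp only [kbar3, tang3]
    rw [show n - 1 + 1 = n by ring, show n + 1 + 1 = n + 2 by ring,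
      det3_den, hsrec n, det3_rec2, mul_div_assoc, div_self hE, mul_one]
    ring
  · simp only [tau3, tang3]
    rw [show n - 1 + 1 = n by ring, show n + 1 + 1 = n + 2 by ring,
      hsrec n, det3_rec3, mul_div_assoc, div_self hE, mul_one]
    ring
end
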